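/- arXiv:2307.01525 — 2 statements merged into one kernel-verified Lean document; each statement's English description precedes it below -/
import Mathlib

section
/- Let (Ω, μ) be a probability space, n a positive integer, Ĥ and F deterministic n×n complex matrices, x : Ω → ℂⁿ a random vector and E : Ω → Mat_{n×n}(ℂ) a random matrix, all with square-integrable entries, such that: (i) 𝔼[x·x^H] = I (entrywise expectations), (ii) 𝔼[E] = 0 (entrywise), (iii) 𝔼[E^H·E] = P·σ_e²·I for some positive integer P and real σ_e² ≥ 0, and (iv) x and E are independent. Then 𝔼[‖((Ĥ + E)·F − I)·x‖²] = ‖Ĥ·F − I‖_F² + P·σ_e²·‖F‖_F². -/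
open Matrix MeasureTheory ProbabilityTheory

/-- Squared Frobenius norm of a complex matrix. -/
def frobSq {n : ℕ} (A : Matrix (Fin n) (Fin n) ℂ) : ℝ :=
  ∑ i, ∑ j, Complex.normSq (A i j)

/-- Squared Euclidean norm of a complex vector. -/
def vecNormSq {n : ℕ} (v : Fin n → ℂ) : ℝ :=
  ∑ i, Complex.normSq (v i)

open scoped ComplexConjugate

section Aux
variable {Ω : Type*} [MeasurableSpace Ω] {μ : Measure Ω}

lemma aux_conj_memLp {f : Ω → ℂ} (hf : MemLp f 2 μ) :
    MemLp (fun ω => conj (f ω)) 2 μ := by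
  simpa [RCLike.inner_apply] using hf.inner_const (𝕜 := ℂ) (1 : ℂ)

lemma aux_mul_integrable {f g : Ω → ℂ} (hf : MemLp f 2 μ) (hg : MemLp g 2 μ) :
    Integrable (fun ω => f ω * g ω) μ := by
  have h := hg.smul (r := 1) hf
  simpa [smul_eq_mul, memLp_one_iff_integrable, Pi.mul_def] using h

lemma aux_indep_integral_mul {f g : Ω → ℂ} (h : IndepFun f g μ)
    (hf : Integrable f μ) (hg : Integrable g μ) :
    ∫ ω, f ω * g ω ∂μ = (∫ ω, f ω ∂μ) * (∫ ω, g ω ∂μ) := by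
  have hfg : Integrable (fun ω => f ω * g ω) μ := h.integrable_mul hf hg
  have hrr : IndepFun (fun ω => (f ω).re) (fun ω => (g ω).re) μ :=
    h.comp Complex.measurable_re Complex.measurable_re
  have hri : IndepFun (fun ω => (f ω).re) (fun ω => (g ω).im) μ :=
    h.comp Complex.measurable_re Complex.measurable_im
  have hir : IndepFun (fun ω => (f ω).im) (fun ω => (g ω).re) μ :=
    h.comp Complex.measurable_im Complex.measurable_re
  have hii : IndepFun (fun ω => (f ω).im) (fun ω => (g ω).im) μ :=
    h.comp Complex.measurable_im Complex.measurable_im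
  have ifr : Integrable (fun ω => (f ω).re) μ := by simpa using hf.re
  have ifi : Integrable (fun ω => (f ω).im) μ := by simpa using hf.im
  have igr : Integrable (fun ω => (g ω).re) μ := by simpa using hg.re
  have igi : Integrable (fun ω => (g ω).im) μ := by simpa using hg.im
  have err : ∫ ω, (f ω).re * (g ω).re ∂μ = (∫ ω, (f ω).re ∂μ) * ∫ ω, (g ω).re ∂μ :=
    hrr.integral_fun_mul_eq_mul_integral ifr.aestronglyMeasurable igr.aestronglyMeasurable
  have eri : ∫ ω, (f ω).re * (g ω).im ∂μ = (∫ ω, (f ω).re ∂μ) * ∫ ω, (g ω).im ∂μ :=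
    hri.integral_fun_mul_eq_mul_integral ifr.aestronglyMeasurable igi.aestronglyMeasurable
  have eir : ∫ ω, (f ω).im * (g ω).re ∂μ = (∫ ω, (f ω).im ∂μ) * ∫ ω, (g ω).re ∂μ :=
    hir.integral_fun_mul_eq_mul_integral ifi.aestronglyMeasurable igr.aestronglyMeasurable
  have eii : ∫ ω, (f ω).im * (g ω).im ∂μ = (∫ ω, (f ω).im ∂μ) * ∫ ω, (g ω).im ∂μ :=
    hii.integral_fun_mul_eq_mul_integral ifi.aestronglyMeasurable igi.aestronglyMeasurable
  have hfre : ∫ ω, (f ω).re ∂μ = (∫ ω, f ω ∂μ).re := by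
    simpa using integral_re (𝕜 := ℂ) hf
  have hfim : ∫ ω, (f ω).im ∂μ = (∫ ω, f ω ∂μ).im := by
    simpa using integral_im (𝕜 := ℂ) hf
  have hgre : ∫ ω, (g ω).re ∂μ = (∫ ω, g ω ∂μ).re := by
    simpa using integral_re (𝕜 := ℂ) hg
  have hgim : ∫ ω, (g ω).im ∂μ = (∫ ω, g ω ∂μ).im := by
    simpa using integral_im (𝕜 := ℂ) hg
  have i_rr : Integrable (fun ω => (f ω).re * (g ω).re) μ := hrr.integrable_mul ifr igr
  have i_ii : Integrable (fun ω => (f ω).im * (g ω).im) μ := hii.integrable_mul ifi igi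
  have i_ri : Integrable (fun ω => (f ω).re * (g ω).im) μ := hri.integrable_mul ifr igi
  have i_ir : Integrable (fun ω => (f ω).im * (g ω).re) μ := hir.integrable_mul ifi igr
  apply Complex.ext
  · have h1 : (∫ ω, f ω * g ω ∂μ).re = ∫ ω, (f ω * g ω).re ∂μ := by
      simpa using (integral_re (𝕜 := ℂ) hfg).symm
    rw [h1]
    have h2 : ∀ ω, (f ω * g ω).re = (f ω).re * (g ω).re - (f ω).im * (g ω).im :=
      fun ω => Complex.mul_re _ _
    rw [integral_congr_ae (Filter.Eventually.of_forall h2),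
      integral_sub i_rr i_ii,
      err, eii, Complex.mul_re, hfre, hfim, hgre, hgim]
  · have h1 : (∫ ω, f ω * g ω ∂μ).im = ∫ ω, (f ω * g ω).im ∂μ := by
      simpa using (integral_im (𝕜 := ℂ) hfg).symm
    rw [h1]
    have h2 : ∀ ω, (f ω * g ω).im = (f ω).re * (g ω).im + (f ω).im * (g ω).re :=
      fun ω => Complex.mul_im _ _
    rw [integral_congr_ae (Filter.Eventually.of_forall h2),
      integral_add i_ri i_ir,
      eri, eir, Complex.mul_im, hfre, hfim, hgre, hgim]

end Aux

/-- **Per-sensor MSE simplification (noiseless part of Eq. (12)–(22)).**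
If `𝔼[x·xᴴ] = I`, `𝔼[E] = 0`, `𝔼[Eᴴ·E] = P·σₑ²·I`, and `x` is independent of `E`, then
`𝔼[‖((Ĥ + E)·F − I)·x‖²] = ‖Ĥ·F − I‖_F² + P·σₑ²·‖F‖_F²`. -/
theorem mse_simplification_no_noise
    {Ω : Type*} [MeasurableSpace Ω] (μ : Measure Ω) [IsProbabilityMeasure μ]
    (n : ℕ) (hn : 0 < n)
    (Hhat F : Matrix (Fin n) (Fin n) ℂ)
    (x : Ω → Fin n → ℂ) (E : Ω → Matrix (Fin n) (Fin n) ℂ)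
    (hxL2 : ∀ i, MemLp (fun ω => x ω i) 2 μ)
    (hEL2 : ∀ i j, MemLp (fun ω => E ω i j) 2 μ)
    (P : ℕ) (hP : 0 < P) (σe2 : ℝ) (hσe : 0 ≤ σe2)
    (hxx : ∀ i j, ∫ ω, x ω i * (starRingEnd ℂ) (x ω j) ∂μ =
      (1 : Matrix (Fin n) (Fin n) ℂ) i j)
    (hE0 : ∀ i j, ∫ ω, E ω i j ∂μ = 0)
    (hEE : ∀ i j, ∫ ω, ((E ω)ᴴ * E ω) i j ∂μ =
      (((P : ℝ) * σe2 : ℝ) : ℂ) • (1 : Matrix (Fin n) (Fin n) ℂ) i j)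
    (hindep : IndepFun x (fun ω => fun i j => E ω i j) μ) :
    ∫ ω, vecNormSq (((Hhat + E ω) * F - 1).mulVec (x ω)) ∂μ =
      frobSq (Hhat * F - 1) + (P : ℝ) * σe2 * frobSq F := by
  classical
  set B : Matrix (Fin n) (Fin n) ℂ := Hhat * F - 1 with hBdef
  set M : Ω → Matrix (Fin n) (Fin n) ℂ := fun ω => (Hhat + E ω) * F - 1 with hMdef
  set Cf : Fin n → Fin n → Ω → ℂ := fun i j ω => ∑ l, E ω i l * F l j with hCfdef
  have hMB : ∀ ω i j, M ω i j = B i j + Cf i j ω := by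
    intro ω i j
    simp only [hMdef, hBdef, hCfdef, Matrix.sub_apply, Matrix.add_mul, Matrix.add_apply,
      Matrix.mul_apply]
    ring
  have hCL2 : ∀ i j, MemLp (Cf i j) 2 μ := by
    intro i j
    have heq : Cf i j = fun ω => ∑ l, F l j * E ω i l := by
      funext ω; exact Finset.sum_congr rfl fun l _ => mul_comm _ _
    rw [heq]
    exact memLp_finset_sum _ fun l _ => (hEL2 i l).const_mul _
  have hCint : ∀ i j, Integrable (Cf i j) μ := fun i j => (hCL2 i j).integrable one_le_two
  have hC0 : ∀ i j, ∫ ω, Cf i j ω ∂μ = 0 := by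
    intro i j
    have : ∫ ω, Cf i j ω ∂μ = ∑ l, ∫ ω, E ω i l * F l j ∂μ :=
      integral_finset_sum _ fun l _ => ((hEL2 i l).integrable one_le_two).mul_const _
    rw [this]
    refine Finset.sum_eq_zero fun l _ => ?_
    rw [integral_mul_const, hE0, zero_mul]
  have hML2 : ∀ i j, MemLp (fun ω => M ω i j) 2 μ := by
    intro i j
    have heq : (fun ω => M ω i j) = fun ω => B i j + Cf i j ω := funext fun ω => hMB ω i j
    rw [heq]
    exact MemLp.add (memLp_const (p := 2) (μ := μ) (B i j)) (hCL2 i j)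
  have hMc : ∀ i j k, Integrable (fun ω => M ω i j * conj (M ω i k)) μ :=
    fun i j k => aux_mul_integrable (hML2 i j) (aux_conj_memLp (hML2 i k))
  have hxc : ∀ j k, Integrable (fun ω => x ω j * conj (x ω k)) μ :=
    fun j k => aux_mul_integrable (hxL2 j) (aux_conj_memLp (hxL2 k))
  have hInd : ∀ i j k, IndepFun (fun ω => M ω i j * conj (M ω i k))
      (fun ω => x ω j * conj (x ω k)) μ := by
    intro i j k
    have hφ : Measurable (fun v : Fin n → ℂ => v j * conj (v k)) :=
      (measurable_pi_apply j).mul (continuous_star.measurable.comp (measurable_pi_apply k))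
    have h1 : ∀ jj : Fin n, Measurable
        (fun N : Fin n → Fin n → ℂ => B i jj + ∑ l, N i l * F l jj) := fun jj =>
      measurable_const.add (Finset.measurable_sum _ fun l _ =>
        ((measurable_pi_apply l).comp (measurable_pi_apply i)).mul_const _)
    have hψ : Measurable (fun N : Fin n → Fin n → ℂ =>
        (B i j + ∑ l, N i l * F l j) * conj (B i k + ∑ l, N i l * F l k)) :=
      (h1 j).mul (continuous_star.measurable.comp (h1 k))
    have hcomp := (hindep.comp hφ hψ).symm
    have heq : (fun ω => M ω i j * conj (M ω i k)) =
        (fun N : Fin n → Fin n → ℂ =>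
          (B i j + ∑ l, N i l * F l j) * conj (B i k + ∑ l, N i l * F l k)) ∘
          (fun ω => fun i j => E ω i j) := by
      funext ω
      simp only [Function.comp_apply]
      rw [hMB, hMB]
    rw [heq]
    exact hcomp
  have hpt : ∀ ω, vecNormSq ((M ω).mulVec (x ω)) =
      (∑ i, ∑ j, ∑ k, (M ω i j * conj (M ω i k)) * (x ω j * conj (x ω k))).re := by
    intro ω
    calc vecNormSq ((M ω).mulVec (x ω))
        = ∑ i, ((∑ j, M ω i j * x ω j) * conj (∑ k, M ω i k * x ω k)).re := by
          simp only [vecNormSq]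
          refine Finset.sum_congr rfl fun i _ => ?_
          rw [show ((M ω).mulVec (x ω)) i = ∑ j, M ω i j * x ω j from rfl,
            Complex.mul_conj, Complex.ofReal_re]
      _ = (∑ i, ∑ j, ∑ k, (M ω i j * conj (M ω i k)) * (x ω j * conj (x ω k))).re := by
          rw [Complex.re_sum]
          refine Finset.sum_congr rfl fun i _ => ?_
          congr 1
          rw [map_sum, Finset.sum_mul_sum]
          exact Finset.sum_congr rfl fun j _ => Finset.sum_congr rfl fun k _ => by
            rw [_root_.map_mul]; ring
  have hint3 : ∀ i j k, Integrable
      (fun ω => (M ω i j * conj (M ω i k)) * (x ω j * conj (x ω k))) μ :=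
    fun i j k => (hInd i j k).integrable_mul (hMc i j k) (hxc j k)
  have hint2 : ∀ i j, Integrable
      (fun ω => ∑ k, (M ω i j * conj (M ω i k)) * (x ω j * conj (x ω k))) μ :=
    fun i j => integrable_finset_sum _ fun k _ => hint3 i j k
  have hint1 : ∀ i, Integrable
      (fun ω => ∑ j, ∑ k, (M ω i j * conj (M ω i k)) * (x ω j * conj (x ω k))) μ :=
    fun i => integrable_finset_sum _ fun j _ => hint2 i j
  have hTint : Integrable (fun ω => ∑ i, ∑ j, ∑ k,
      (M ω i j * conj (M ω i k)) * (x ω j * conj (x ω k))) μ :=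
    integrable_finset_sum _ fun i _ => hint1 i
  have hsplit : (∫ ω, ∑ i, ∑ j, ∑ k,
      (M ω i j * conj (M ω i k)) * (x ω j * conj (x ω k)) ∂μ)
      = ∑ i, ∑ j, ∫ ω, M ω i j * conj (M ω i j) ∂μ := by
    rw [integral_finset_sum _ fun i _ => hint1 i]
    refine Finset.sum_congr rfl fun i _ => ?_
    rw [integral_finset_sum _ fun j _ => hint2 i j]
    refine Finset.sum_congr rfl fun j _ => ?_
    rw [integral_finset_sum _ fun k _ => hint3 i j k]
    have hk : ∀ k, ∫ ω, (M ω i j * conj (M ω i k)) * (x ω j * conj (x ω k)) ∂μ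
        = (∫ ω, M ω i j * conj (M ω i k) ∂μ) * (1 : Matrix (Fin n) (Fin n) ℂ) j k := by
      intro k
      rw [aux_indep_integral_mul (hInd i j k) (hMc i j k) (hxc j k), hxx]
    rw [Finset.sum_congr rfl fun k _ => hk k]
    simp [Matrix.one_apply, mul_ite, mul_one, mul_zero]
  have hdiag : ∀ i j, ∫ ω, M ω i j * conj (M ω i j) ∂μ
      = ((Complex.normSq (B i j) : ℝ) : ℂ) + ∫ ω, Cf i j ω * conj (Cf i j ω) ∂μ := by
    intro i j
    have heq : (fun ω => M ω i j * conj (M ω i j)) =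
        fun ω => (B i j * conj (B i j) + B i j * conj (Cf i j ω))
          + (Cf i j ω * conj (B i j) + Cf i j ω * conj (Cf i j ω)) := by
      funext ω; rw [hMB]; simp only [map_add]; ring
    have iBC : Integrable (fun ω => B i j * conj (Cf i j ω)) μ :=
      ((aux_conj_memLp (hCL2 i j)).integrable one_le_two).const_mul _
    have iCB : Integrable (fun ω => Cf i j ω * conj (B i j)) μ :=
      (hCint i j).mul_const _
    have iCC : Integrable (fun ω => Cf i j ω * conj (Cf i j ω)) μ :=
      aux_mul_integrable (hCL2 i j) (aux_conj_memLp (hCL2 i j))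
    have i12 : Integrable (fun ω => B i j * conj (B i j) + B i j * conj (Cf i j ω)) μ :=
      (integrable_const _).add iBC
    have i34 : Integrable (fun ω => Cf i j ω * conj (B i j) + Cf i j ω * conj (Cf i j ω)) μ :=
      iCB.add iCC
    rw [heq, integral_add i12 i34, integral_add (integrable_const _) iBC,
      integral_add iCB iCC, integral_const, integral_const_mul, integral_mul_const,
      integral_conj, hC0]
    simp [Complex.mul_conj, measure_univ]
  have hEsum : ∀ l m, ∑ i, ∫ ω, E ω i l * conj (E ω i m) ∂μ
      = ((((P : ℝ) * σe2 : ℝ) : ℂ)) * (1 : Matrix (Fin n) (Fin n) ℂ) l m := by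
    intro l m
    have h1 : ∫ ω, ((E ω)ᴴ * E ω) l m ∂μ = ∑ i, ∫ ω, conj (E ω i l) * E ω i m ∂μ := by
      have heq : (fun ω => ((E ω)ᴴ * E ω) l m) = fun ω => ∑ i, conj (E ω i l) * E ω i m := by
        funext ω; simp [Matrix.mul_apply, Matrix.conjTranspose_apply]
      rw [heq]
      exact integral_finset_sum _ fun i _ =>
        aux_mul_integrable (aux_conj_memLp (hEL2 i l)) (hEL2 i m)
    have h2 := hEE l m
    rw [h1] at h2
    have h3 : ∑ i, ∫ ω, E ω i l * conj (E ω i m) ∂μ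
        = conj (∑ i, ∫ ω, conj (E ω i l) * E ω i m ∂μ) := by
      rw [map_sum]
      refine Finset.sum_congr rfl fun i _ => ?_
      rw [← integral_conj]
      congr 1; funext ω; rw [_root_.map_mul, Complex.conj_conj, mul_comm]
    rw [h3, h2]
    by_cases h : l = m <;>
      simp [Matrix.smul_apply, Matrix.one_apply, h, Complex.conj_ofReal]
  have hCC : ∑ i, ∑ j, ∫ ω, Cf i j ω * conj (Cf i j ω) ∂μ
      = (((P : ℝ) * σe2 * frobSq F : ℝ) : ℂ) := by
    have hterm : ∀ i j, ∫ ω, Cf i j ω * conj (Cf i j ω) ∂μ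
        = ∑ l, ∑ m, (F l j * conj (F m j)) * ∫ ω, E ω i l * conj (E ω i m) ∂μ := by
      intro i j
      have heq : (fun ω => Cf i j ω * conj (Cf i j ω)) =
          fun ω => ∑ l, ∑ m, (F l j * conj (F m j)) * (E ω i l * conj (E ω i m)) := by
        funext ω
        show (∑ l, E ω i l * F l j) * conj (∑ m, E ω i m * F m j) = _
        rw [map_sum, Finset.sum_mul_sum]
        exact Finset.sum_congr rfl fun l _ => Finset.sum_congr rfl fun m _ => by
          rw [_root_.map_mul]; ring
      rw [heq, integral_finset_sum _ fun l _ => integrable_finset_sum _ fun m _ =>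
        (aux_mul_integrable (hEL2 i l) (aux_conj_memLp (hEL2 i m))).const_mul _]
      refine Finset.sum_congr rfl fun l _ => ?_
      rw [integral_finset_sum _ fun m _ =>
        (aux_mul_integrable (hEL2 i l) (aux_conj_memLp (hEL2 i m))).const_mul _]
      exact Finset.sum_congr rfl fun m _ => integral_const_mul _ _
    calc ∑ i, ∑ j, ∫ ω, Cf i j ω * conj (Cf i j ω) ∂μ
        = ∑ i, ∑ j, ∑ l, ∑ m, (F l j * conj (F m j)) * ∫ ω, E ω i l * conj (E ω i m) ∂μ :=
          Finset.sum_congr rfl fun i _ => Finset.sum_congr rfl fun j _ => hterm i j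
      _ = ∑ j, ∑ l, ∑ m, (F l j * conj (F m j)) * ∑ i, ∫ ω, E ω i l * conj (E ω i m) ∂μ := by
          rw [Finset.sum_comm]
          refine Finset.sum_congr rfl fun j _ => ?_
          rw [Finset.sum_comm]
          refine Finset.sum_congr rfl fun l _ => ?_
          rw [Finset.sum_comm]
          refine Finset.sum_congr rfl fun m _ => ?_
          rw [← Finset.mul_sum]
      _ = ∑ j, ∑ l, ∑ m, (F l j * conj (F m j)) *
            (((((P : ℝ) * σe2 : ℝ) : ℂ)) * (1 : Matrix (Fin n) (Fin n) ℂ) l m) := by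
          exact Finset.sum_congr rfl fun j _ => Finset.sum_congr rfl fun l _ =>
            Finset.sum_congr rfl fun m _ => by rw [hEsum]
      _ = (((P : ℝ) * σe2 * frobSq F : ℝ) : ℂ) := by
          simp only [Matrix.one_apply, mul_ite, mul_one, mul_zero, Finset.sum_ite_eq,
            Finset.mem_univ, if_true, Complex.mul_conj]
          rw [frobSq]
          push_cast
          rw [Finset.sum_comm]
          rw [Finset.mul_sum]
          refine Finset.sum_congr rfl fun l _ => ?_
          rw [Finset.mul_sum]
          refine Finset.sum_congr rfl fun j _ => ?_
          ring
  have hB2 : ∑ i, ∑ j, ((Complex.normSq (B i j) : ℝ) : ℂ) = ((frobSq B : ℝ) : ℂ) := by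
    rw [frobSq]; push_cast; rfl
  calc ∫ ω, vecNormSq ((M ω).mulVec (x ω)) ∂μ
      = ∫ ω, (∑ i, ∑ j, ∑ k, (M ω i j * conj (M ω i k)) * (x ω j * conj (x ω k))).re ∂μ :=
        integral_congr_ae (Filter.Eventually.of_forall fun ω => hpt ω)
    _ = (∫ ω, ∑ i, ∑ j, ∑ k, (M ω i j * conj (M ω i k)) * (x ω j * conj (x ω k)) ∂μ).re := by
        simpa using integral_re (𝕜 := ℂ) hTint
    _ = (∑ i, ∑ j, ∫ ω, M ω i j * conj (M ω i j) ∂μ).re := by rw [hsplit]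
    _ = (((frobSq B : ℝ) : ℂ) + (((P : ℝ) * σe2 * frobSq F : ℝ) : ℂ)).re := by
        rw [Finset.sum_congr rfl fun i _ => Finset.sum_congr rfl fun j _ => hdiag i j]
        simp only [Finset.sum_add_distrib]
        rw [hB2, hCC]
    _ = frobSq B + (P : ℝ) * σe2 * frobSq F := by
        simp
end

section
/- Let M, N, P be positive integers and set n = M·N. Let Π be the n×n cyclic shift permutation matrix with entries Π_{i,j} = 1 if i ≡ j + 1 (mod n) and 0 otherwise, and let Δ be the n×n diagonal matrix with diagonal entries exp(2πi·m/n) for m = 0, …, n−1. Let l : Fin P → ℕ and k : Fin P → ℤ be given delay and Doppler taps. Let (Ω, μ) be a probability space and e_1, …, e_P : Ω → ℂ square-integrable random variables satisfying 𝔼[e_p] = 0 for all p, 𝔼[e_p · conj(e_q)] = 0 for all p ≠ q, and 𝔼[|e_p|²] = σ_e² for all p, where σ_e² ≥ 0. Define the random matrix E^{TD}(ω) = Σ_{p=1}^{P} e_p(ω) · Π^{l_p} · Δ^{k_p}. Then the entrywise expectation of (E^{TD})^H · E^{TD} equals P·σ_e²·I, i.e., 𝔼[((E^{TD})^H·E^{TD})_{m,m}]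 = P·σ_e² for every m and 𝔼[((E^{TD})^H·E^{TD})_{m,m'}] = 0 for every m ≠ m'. -/
open Matrix MeasureTheory ProbabilityTheory

/-- The `n×n` cyclic shift (delay) permutation matrix `Π`, with `Π i j = 1`
iff `i ≡ j + 1 (mod n)`. -/
def shiftMat (n : ℕ) : Matrix (Fin n) (Fin n) ℂ :=
  Matrix.of fun i j => if (i : ℕ) = ((j : ℕ) + 1) % n then 1 else 0

/-- The `n×n` Doppler diagonal matrix `Δ`, with diagonal entries `exp(2πi·m/n)`,
`m = 0, …, n−1`. -/
noncomputable def dopplerMat (n : ℕ) : Matrix (Fin n) (Fin n) ℂ :=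
  Matrix.diagonal fun m : Fin n => Complex.exp (2 * Real.pi * Complex.I * (m : ℕ) / n)

/-- The successor map on `Fin n`. -/
def succFun (n : ℕ) [NeZero n] : Fin n → Fin n :=
  fun j => ⟨((j : ℕ) + 1) % n, Nat.mod_lt _ (Nat.pos_of_ne_zero (NeZero.ne n))⟩

lemma succFun_injective (n : ℕ) [NeZero n] : Function.Injective (succFun n) := by
  intro a b h
  have h' : ((a : ℕ) + 1) % n = ((b : ℕ) + 1) % n := congrArg Fin.val h
  have h2 : (a : ℕ) % n = (b : ℕ) % n := Nat.ModEq.add_right_cancel' 1 h'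
  have ha : (a : ℕ) % n = a := Nat.mod_eq_of_lt a.isLt
  have hb : (b : ℕ) % n = b := Nat.mod_eq_of_lt b.isLt
  exact Fin.ext (by rw [← ha, ← hb, h2])

lemma shiftMat_eq (n : ℕ) [NeZero n] :
    shiftMat n = Matrix.of fun i j => if i = succFun n j then (1 : ℂ) else 0 := by
  ext i j
  simp only [shiftMat, of_apply, succFun, Fin.ext_iff]

lemma shiftMat_star_mul (n : ℕ) [NeZero n] : (shiftMat n)ᴴ * shiftMat n = 1 := by
  rw [shiftMat_eq]
  ext i j
  rw [Matrix.mul_apply]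
  simp only [conjTranspose_apply, of_apply, apply_ite (star : ℂ → ℂ), star_one, star_zero,
    ite_mul, one_mul, zero_mul]
  rw [Finset.sum_ite_eq' Finset.univ (succFun n i)
    (fun x => if x = succFun n j then (1 : ℂ) else 0)]
  simp only [Finset.mem_univ, if_true, Matrix.one_apply]
  by_cases h : i = j
  · simp [h]
  · have h2 : ¬ succFun n i = succFun n j := fun hc => h (succFun_injective n hc)
    simp [h, h2]

lemma shiftMat_mul_star (n : ℕ) [NeZero n] : shiftMat n * (shiftMat n)ᴴ = 1 :=
  mul_eq_one_comm.mp (shiftMat_star_mul n)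

lemma dopplerMat_star_mul (n : ℕ) : (dopplerMat n)ᴴ * dopplerMat n = 1 := by
  have key : ∀ i : Fin n, (starRingEnd ℂ) (Complex.exp (2 * Real.pi * Complex.I * (i : ℕ) / n)) *
      Complex.exp (2 * Real.pi * Complex.I * (i : ℕ) / n) = 1 := by
    intro i
    rw [← Complex.exp_conj, ← Complex.exp_add]
    have h : (starRingEnd ℂ) (2 * ↑Real.pi * Complex.I * ((i : ℕ) : ℂ) / ↑n)
        = -(2 * ↑Real.pi * Complex.I * ((i : ℕ) : ℂ) / ↑n) := by
      simp only [map_div₀, _root_.map_mul, Complex.conj_I, Complex.conj_ofReal, map_ofNat,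
        Complex.conj_natCast]
      ring
    rw [h, neg_add_cancel, Complex.exp_zero]
  rw [dopplerMat, Matrix.diagonal_conjTranspose, Matrix.diagonal_mul_diagonal]
  simp only [Pi.star_apply, RCLike.star_def, key]
  exact Matrix.diagonal_one

lemma dopplerMat_mul_star (n : ℕ) : dopplerMat n * (dopplerMat n)ᴴ = 1 :=
  mul_eq_one_comm.mp (dopplerMat_star_mul n)

lemma star_pow_mul_pow {n : ℕ} (A : Matrix (Fin n) (Fin n) ℂ)
    (h1 : Aᴴ * A = 1) (m : ℕ) : (A ^ m)ᴴ * A ^ m = 1 := by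
  induction m with
  | zero => simp
  | succ m ih =>
      rw [pow_succ, Matrix.conjTranspose_mul, Matrix.mul_assoc,
        ← Matrix.mul_assoc ((A ^ m)ᴴ), ih, Matrix.one_mul, h1]

lemma star_zpow_mul_zpow {n : ℕ} (A : Matrix (Fin n) (Fin n) ℂ)
    (h1 : Aᴴ * A = 1) (h2 : A * Aᴴ = 1) (m : ℤ) : (A ^ m)ᴴ * A ^ m = 1 := by
  cases m with
  | ofNat m => rw [Int.ofNat_eq_coe, zpow_natCast]; exact star_pow_mul_pow A h1 m
  | negSucc m =>
      rw [zpow_negSucc]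
      have hmul : A ^ (m + 1) * (A ^ (m + 1))ᴴ = 1 := by
        have h3 := star_pow_mul_pow Aᴴ (by rwa [Matrix.conjTranspose_conjTranspose]) (m + 1)
        rw [Matrix.conjTranspose_pow]
        rwa [Matrix.conjTranspose_pow, Matrix.conjTranspose_conjTranspose] at h3
      rw [Matrix.inv_eq_right_inv hmul, Matrix.conjTranspose_conjTranspose]
      exact hmul

/-- **Second moment of the time-domain channel error matrix (Eqs. (19)–(20)).**
With `E^{TD}(ω) = Σ_p e_p(ω)·Π^{l_p}·Δ^{k_p}` for zero-mean, pairwise uncorrelated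
channel-gain errors `e_p` of variance `σₑ²`, the entrywise expectation of
`(E^{TD})ᴴ·E^{TD}` equals `P·σₑ²·I`. -/
theorem timeDomain_error_second_moment
    {Ω : Type*} [MeasurableSpace Ω] (μ : Measure Ω) [IsProbabilityMeasure μ]
    (M N P : ℕ) (hM : 0 < M) (hN : 0 < N) (hP : 0 < P)
    (n : ℕ) (hn : n = M * N)
    (l : Fin P → ℕ) (k : Fin P → ℤ)
    (e : Fin P → Ω → ℂ) (heL2 : ∀ p, MemLp (e p) 2 μ)
    (hmean : ∀ p, ∫ ω, e p ω ∂μ = 0)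
    (huncorr : ∀ p q, p ≠ q → ∫ ω, e p ω * (starRingEnd ℂ) (e q ω) ∂μ = 0)
    (σe2 : ℝ) (hσe : 0 ≤ σe2)
    (hvar : ∀ p, ∫ ω, Complex.normSq (e p ω) ∂μ = σe2)
    (ETD : Ω → Matrix (Fin n) (Fin n) ℂ)
    (hETD : ∀ ω, ETD ω = ∑ p, e p ω • (shiftMat n ^ l p * dopplerMat n ^ k p)) :
    ∀ m m' : Fin n, ∫ ω, ((ETD ω)ᴴ * ETD ω) m m' ∂μ =
      (((P : ℝ) * σe2 : ℝ) : ℂ) • (1 : Matrix (Fin n) (Fin n) ℂ) m m' := by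
  have hnpos : 0 < n := hn ▸ Nat.mul_pos hM hN
  haveI : NeZero n := ⟨hnpos.ne'⟩
  intro m m'
  set U : Fin P → Matrix (Fin n) (Fin n) ℂ :=
    fun p => shiftMat n ^ l p * dopplerMat n ^ k p with hUdef
  -- each U p is an isometry
  have hU : ∀ p, (U p)ᴴ * U p = 1 := by
    intro p
    show (shiftMat n ^ l p * dopplerMat n ^ k p)ᴴ * (shiftMat n ^ l p * dopplerMat n ^ k p) = 1
    rw [Matrix.conjTranspose_mul, Matrix.mul_assoc, ← Matrix.mul_assoc ((shiftMat n ^ l p)ᴴ),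
      star_pow_mul_pow _ (shiftMat_star_mul n), Matrix.one_mul,
      star_zpow_mul_zpow _ (dopplerMat_star_mul n) (dopplerMat_mul_star n)]
  -- pointwise expansion of the entry
  have hentry : ∀ ω, ((ETD ω)ᴴ * ETD ω) m m' =
      ∑ p, ∑ q, (starRingEnd ℂ) (e p ω) * e q ω * ((U p)ᴴ * U q) m m' := by
    intro ω
    rw [hETD]
    rw [Matrix.conjTranspose_sum, Matrix.sum_mul]
    rw [Matrix.sum_apply]
    refine Finset.sum_congr rfl fun p _ => ?_
    rw [Matrix.mul_sum, Matrix.sum_apply]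
    refine Finset.sum_congr rfl fun q _ => ?_
    rw [Matrix.conjTranspose_smul, Matrix.smul_mul, Matrix.mul_smul, Matrix.smul_apply,
      Matrix.smul_apply, smul_smul, smul_eq_mul]
    rfl
  -- integrability of each summand
  have hconj : ∀ p, MemLp (fun ω => (starRingEnd ℂ) (e p ω)) 2 μ := by
    intro p
    refine (heL2 p).of_le (Complex.continuous_conj.comp_aestronglyMeasurable
      (heL2 p).aestronglyMeasurable) ?_
    filter_upwards with ω
    simp
  have hint : ∀ p q : Fin P,
      Integrable (fun ω => (starRingEnd ℂ) (e p ω) * e q ω * ((U p)ᴴ * U q) m m') μ := by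
    intro p q
    have h1 : MemLp (fun ω => (starRingEnd ℂ) (e p ω) * e q ω) 1 μ := by
      have h2 := ((heL2 q).smul (hconj p) (p := 2) (q := 2) (r := 1)
        (hpqr := ⟨by simp [one_div, ENNReal.inv_two_add_inv_two]⟩))
      exact h2
    exact (memLp_one_iff_integrable.mp h1).mul_const _
  -- compute the integral
  rw [show (fun ω => ((ETD ω)ᴴ * ETD ω) m m') = fun ω =>
      ∑ p, ∑ q, (starRingEnd ℂ) (e p ω) * e q ω * ((U p)ᴴ * U q) m m' from funext hentry]
  rw [integral_finset_sum _ (fun p _ => integrable_finset_sum _ (fun q _ => hint p q))]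
  have hsum : ∀ p : Fin P,
      ∫ ω, (∑ q, (starRingEnd ℂ) (e p ω) * e q ω * ((U p)ᴴ * U q) m m') ∂μ
        = (σe2 : ℂ) * (1 : Matrix (Fin n) (Fin n) ℂ) m m' := by
    intro p
    rw [integral_finset_sum _ (fun q _ => hint p q)]
    have hterm : ∀ q : Fin P,
        ∫ ω, (starRingEnd ℂ) (e p ω) * e q ω * ((U p)ᴴ * U q) m m' ∂μ
          = (∫ ω, (starRingEnd ℂ) (e p ω) * e q ω ∂μ) * ((U p)ᴴ * U q) m m' := by
      intro q
      exact integral_mul_const _ _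
    rw [Finset.sum_congr rfl fun q _ => hterm q]
    rw [Finset.sum_eq_single p]
    · have hd : (∫ ω, (starRingEnd ℂ) (e p ω) * e p ω ∂μ) = (σe2 : ℂ) := by
        have heq : (fun ω => (starRingEnd ℂ) (e p ω) * e p ω)
            = fun ω => ((Complex.normSq (e p ω) : ℝ) : ℂ) := by
          funext ω
          rw [← Complex.normSq_eq_conj_mul_self]
        rw [heq]
        have h3 : ∫ ω, ((Complex.normSq (e p ω) : ℝ) : ℂ) ∂μ
            = ((∫ ω, Complex.normSq (e p ω) ∂μ : ℝ) : ℂ) := integral_ofReal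
        rw [h3, hvar p]
      rw [hd, hU p]
    · intro q _ hq
      have hz : (∫ ω, (starRingEnd ℂ) (e p ω) * e q ω ∂μ) = 0 := by
        have heq : (fun ω => (starRingEnd ℂ) (e p ω) * e q ω)
            = fun ω => (starRingEnd ℂ) (e p ω * (starRingEnd ℂ) (e q ω)) := by
          funext ω; simp [mul_comm]
        rw [heq, integral_conj, huncorr p q (fun h => hq (h ▸ rfl)), map_zero]
      rw [hz, zero_mul]
    · intro h; exact absurd (Finset.mem_univ p) h
  rw [Finset.sum_congr rfl fun p _ => hsum p, Finset.sum_const, Finset.card_univ,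
    Fintype.card_fin, nsmul_eq_mul, smul_eq_mul]
  push_cast
  ring
end
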